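/- Let F : D_F → Y satisfy the two-sided Lipschitz condition (1/M₁)‖f₁−f₂‖_{X₋} ≤ ‖F(f₁)−F(f₂)‖_Y ≤ M₂‖f₁−f₂‖_{X₋} on a subset D_F of a quasi-Banach space X_R with continuous embedding X_R ⊆ X₋. Let f ∈ (X₋,X_R)_{θ,∞} with norm at most ϱ, θ ∈ (0,1], u > 0, α > 0, and suppose f_t ∈ D_F for the approximations from the K-functional with t = c α^{1/((1−θ)u+2θ)} ϱ^{(u−2)/((1−θ)u+2θ)}. If f_α minimizes h ↦ (1/(2α))‖F(f)−F(h)‖_Y² + (1/u)‖h‖_{X_R}^u over D_F, then there is a constant C (depending only on M₁, M₂, u, θ, c and the quasi-norm constant of X_R) with ‖f − f_α‖_{X₋} ≤ C ϱ^{u/((1−θ)u+2θ)} α^{θ/((1−θ)u+2θ)} and ‖f_α‖_{X_R} ≤ C ϱ^{2/((1−θ)u+2θ)} α^{(θ−1)/((1−θ)u+2θ)}. -/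

import Mathlib

/-!
Compare the Tikhonov functional at its minimiser `f_α` with its value at `f_{t₀}`. With
`D = (1-θ)u + 2θ`, `δ = ϱ^{u/D} α^{θ/D}` and `r = ϱ^{2/D} α^{(θ-1)/D}`, the parameter `t₀` is
chosen so that `ϱ t₀^θ = c^θ δ`, `ϱ t₀^{θ-1} = c^{θ-1} r` and `δ² = α r^u`; hence both terms of the
value at `f_{t₀}` are of order `r^u`. So is the value at `f_α`, which gives `‖F f - F f_α‖ ≲ δ`
(then `‖f - f_α‖_{X₋} ≲ δ` by the lower Lipschitz bound) and `‖f_α‖_{X_R} ≲ r`.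
-/

open Set

/-- The K-functional `K(t,f) = inf_{h ∈ X_R} (‖f−h‖_{X₋} + t‖h‖_{X_R})`. -/
noncomputable def Kfun {E : Type*} [AddCommGroup E]
    (Nm : E → ℝ) (X : Set E) (NX : E → ℝ) (t : ℝ) (f : E) : ℝ :=
  sInf ((fun h => Nm (f - h) + t * NX h) '' X)

open Real

section Tikhonov
variable {E Y : Type*} [NormedAddCommGroup Y]

noncomputable def tikhonov (F : E → Y) (NR : E → ℝ) (u α : ℝ) (g h : E) : ℝ :=
  1 / (2 * α) * ‖F g - F h‖ ^ 2 + 1 / u * NR h ^ u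

variable {F : E → Y} {NR : E → ℝ} {u α a b V : ℝ} {g h : E}

lemma tikhonov_le_of_le (hu : 0 ≤ u) (hα : 0 ≤ α) (hNR : 0 ≤ NR h) (ha : ‖F g - F h‖ ≤ a)
    (hb : NR h ≤ b) : tikhonov F NR u α g h ≤ 1 / (2 * α) * a ^ 2 + 1 / u * b ^ u := by
  unfold tikhonov
  gcongr

lemma norm_sub_le_sqrt_of_tikhonov_le (hu : 0 ≤ u) (hα : 0 < α) (hNR : 0 ≤ NR h)
    (hV : tikhonov F NR u α g h ≤ V) : ‖F g - F h‖ ≤ √(2 * α * V) := by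
  have hfid : 1 / (2 * α) * ‖F g - F h‖ ^ 2 ≤ V := by
    unfold tikhonov at hV
    have : 0 ≤ 1 / u * NR h ^ u := by positivity
    linarith
  apply le_sqrt_of_sq_le
  rw [div_mul_eq_mul_div, one_mul, div_le_iff₀ (by positivity)] at hfid
  linarith

lemma le_rpow_inv_of_tikhonov_le (hu : 0 < u) (hα : 0 ≤ α) (hNR : 0 ≤ NR h)
    (hV : tikhonov F NR u α g h ≤ V) : NR h ≤ (u * V) ^ u⁻¹ := by
  have hreg : NR h ^ u ≤ u * V := by
    unfold tikhonov at hV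
    have : 0 ≤ 1 / (2 * α) * ‖F g - F h‖ ^ 2 := by positivity
    rw [← div_le_iff₀' hu, ← one_div_mul_eq_div]
    linarith
  exact (le_rpow_inv_iff_of_pos hNR ((rpow_nonneg hNR u).trans hreg) hu).2 hreg

lemma bias_bounds_of_tikhonov_le [Sub E] {Nm : E → ℝ} {M₁ K δ r : ℝ} (hM₁ : 0 < M₁) (hu : 0 < u)
    (hα : 0 < α) (hK : 0 ≤ K) (hδ : 0 ≤ δ) (hr : 0 ≤ r) (hδr : δ ^ 2 = α * r ^ u)
    (hLip : M₁⁻¹ * Nm (g - h) ≤ ‖F g - F h‖) (hNR : 0 ≤ NR h)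
    (hV : tikhonov F NR u α g h ≤ K * r ^ u) :
    Nm (g - h) ≤ M₁ * √(2 * K) * δ ∧ NR h ≤ (u * K) ^ u⁻¹ * r := by
  constructor
  · calc Nm (g - h) ≤ M₁ * ‖F g - F h‖ := (inv_mul_le_iff₀ hM₁).1 hLip
      _ ≤ M₁ * √(2 * α * (K * r ^ u)) := by
          gcongr; exact norm_sub_le_sqrt_of_tikhonov_le hu.le hα hNR hV
      _ = M₁ * √(2 * K) * δ := by
          rw [show 2 * α * (K * r ^ u) = 2 * K * δ ^ 2 by rw [hδr]; ring,
            sqrt_mul (by positivity), sqrt_sq hδ, mul_assoc]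
  · calc NR h ≤ (u * (K * r ^ u)) ^ u⁻¹ := le_rpow_inv_of_tikhonov_le hu hα.le hNR hV
      _ = (u * K) ^ u⁻¹ * r := by
          rw [← mul_assoc, mul_rpow (by positivity) (by positivity), rpow_rpow_inv hr hu.ne']

end Tikhonov

section Rates
variable {u θ c ϱ α D : ℝ}

lemma mul_param_rpow_theta (hc : 0 < c) (hϱ : 0 < ϱ) (hα : 0 < α) (hD : D = (1 - θ) * u + 2 * θ)
    (hD0 : D ≠ 0) :
    ϱ * (c * α ^ (1 / D) * ϱ ^ ((u - 2) / D)) ^ θ = c ^ θ * (ϱ ^ (u / D) * α ^ (θ / D)) := by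
  rw [mul_rpow (by positivity) (by positivity), mul_rpow hc.le (by positivity),
    ← rpow_mul hα.le, ← rpow_mul hϱ.le]
  have : u / D = 1 + (u - 2) / D * θ := by field_simp; linarith
  rw [this, rpow_add hϱ, rpow_one]
  ring_nf

lemma mul_param_rpow_theta_sub_one (hc : 0 < c) (hϱ : 0 < ϱ) (hα : 0 < α)
    (hD : D = (1 - θ) * u + 2 * θ) (hD0 : D ≠ 0) :
    ϱ * (c * α ^ (1 / D) * ϱ ^ ((u - 2) / D)) ^ (θ - 1) =
      c ^ (θ - 1) * (ϱ ^ (2 / D) * α ^ ((θ - 1) / D)) := by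
  rw [mul_rpow (by positivity) (by positivity), mul_rpow hc.le (by positivity),
    ← rpow_mul hα.le, ← rpow_mul hϱ.le]
  have : 2 / D = 1 + (u - 2) / D * (θ - 1) := by field_simp; linarith
  rw [this, rpow_add hϱ, rpow_one]
  ring_nf

lemma sq_bias_rate_eq (hϱ : 0 < ϱ) (hα : 0 < α) (hD : D = (1 - θ) * u + 2 * θ) (hD0 : D ≠ 0) :
    (ϱ ^ (u / D) * α ^ (θ / D)) ^ 2 = α * (ϱ ^ (2 / D) * α ^ ((θ - 1) / D)) ^ u := by
  rw [mul_rpow (by positivity) (by positivity), ← rpow_mul hα.le, ← rpow_mul hϱ.le, mul_pow,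
    ← rpow_mul_natCast hα.le, ← rpow_mul_natCast hϱ.le]
  have : θ / D * (2 : ℕ) = 1 + (θ - 1) / D * u := by push_cast; field_simp; linarith
  rw [this, rpow_add hα, rpow_one]
  ring_nf

end Rates

theorem oversmoothing_bias_bounds_general {E Y : Type*} [AddCommGroup E] [NormedAddCommGroup Y]
    (Nm NR : E → ℝ) (XR DF : Set E) (F : E → Y)
    (M₁ M₂ u θ c : ℝ) (hM₁ : 0 < M₁) (hM₂ : 0 < M₂) (hu : 0 < u)
    (hθ0 : 0 < θ) (hθ1 : θ ≤ 1) (hc : 0 < c)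
    (hNR : ∀ g, 0 ≤ NR g) :
    ∃ C > 0, ∀ (f : E) (ϱ α : ℝ) (fα ft : E), 0 < ϱ → 0 < α →
      -- two-sided Lipschitz condition on `D_F ∪ {f}`
      (∀ f₁ ∈ insert f DF, ∀ f₂ ∈ insert f DF,
        M₁⁻¹ * Nm (f₁ - f₂) ≤ ‖F f₁ - F f₂‖ ∧ ‖F f₁ - F f₂‖ ≤ M₂ * Nm (f₁ - f₂)) →
      -- `f ∈ (X₋,X_R)_{θ,∞}` with norm at most `ϱ`
      (∀ t > 0, Kfun Nm XR NR t f ≤ ϱ * t ^ θ) →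
      -- the K-functional approximation `f_t` for the specific parameter `t₀`
      (ft ∈ DF ∧
        Nm (f - ft) ≤ 2 * ϱ * (c * α ^ ((1 : ℝ) / ((1 - θ) * u + 2 * θ)) *
          ϱ ^ ((u - 2) / ((1 - θ) * u + 2 * θ))) ^ θ ∧
        NR ft ≤ 2 * ϱ * (c * α ^ ((1 : ℝ) / ((1 - θ) * u + 2 * θ)) *
          ϱ ^ ((u - 2) / ((1 - θ) * u + 2 * θ))) ^ (θ - 1)) →
      -- `f_α` minimizes the Tikhonov functional with exact data `F(f)` over `D_F`
      (fα ∈ DF ∧ ∀ h ∈ DF,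
        1 / (2 * α) * ‖F f - F fα‖ ^ 2 + 1 / u * NR fα ^ u ≤
          1 / (2 * α) * ‖F f - F h‖ ^ 2 + 1 / u * NR h ^ u) →
      Nm (f - fα) ≤ C * ϱ ^ (u / ((1 - θ) * u + 2 * θ)) * α ^ (θ / ((1 - θ) * u + 2 * θ)) ∧
      NR fα ≤ C * ϱ ^ ((2 : ℝ) / ((1 - θ) * u + 2 * θ)) *
        α ^ ((θ - 1) / ((1 - θ) * u + 2 * θ)) := by
  have hD0 : (1 - θ) * u + 2 * θ ≠ 0 := by nlinarith
  set D := (1 - θ) * u + 2 * θ with hD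
  set K := 2 * (M₂ * c ^ θ) ^ 2 + (2 * c ^ (θ - 1)) ^ u / u
  have hK : 0 < K := by positivity
  refine ⟨max (M₁ * √(2 * K)) ((u * K) ^ u⁻¹), lt_max_of_lt_left (by positivity), ?_⟩
  rintro f ϱ α fα ft hϱ hα hLip - ⟨hftDF, hft_err, hft_norm⟩ ⟨hfαDF, hmin⟩
  have hLip' (h : E) (hh : h ∈ DF) := hLip f (mem_insert f DF) h (mem_insert_of_mem f hh)
  have hr : 0 ≤ ϱ ^ (2 / D) * α ^ ((θ - 1) / D) := by positivity
  have hδr := sq_bias_rate_eq hϱ hα hD hD0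
  rw [mul_assoc 2, mul_param_rpow_theta hc hϱ hα hD hD0, ← mul_assoc] at hft_err
  rw [mul_assoc 2, mul_param_rpow_theta_sub_one hc hϱ hα hD hD0, ← mul_assoc] at hft_norm
  have hFft : ‖F f - F ft‖ ≤ M₂ * (2 * c ^ θ * (ϱ ^ (u / D) * α ^ (θ / D))) :=
    (hLip' ft hftDF).2.trans (by gcongr)
  have hval : tikhonov F NR u α f fα ≤ K * (ϱ ^ (2 / D) * α ^ ((θ - 1) / D)) ^ u := by
    refine (hmin ft hftDF).trans ((tikhonov_le_of_le hu.le hα.le (hNR ft) hFft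
      hft_norm).trans_eq ?_)
    rw [mul_rpow (by positivity) hr, mul_pow M₂, mul_pow _ (_ * _), hδr]
    simp only [K]
    field_simp
  obtain ⟨h_bias, h_norm⟩ := bias_bounds_of_tikhonov_le hM₁ hu hα hK.le (by positivity) hr hδr
    (hLip' fα hfαDF).1 (hNR fα) hval
  refine ⟨h_bias.trans ?_, h_norm.trans ?_⟩ <;> rw [mul_assoc (max _ _)] <;> gcongr
  exacts [le_max_left _ _, le_max_right _ _]

/-- Bias bounds for oversmoothing Tikhonov regularization with exact data
(Theorem 2.4(a)): under a two-sided Lipschitz condition on `F` w.r.t. `‖·‖_{X₋}`,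
for `f ∈ (X₋,X_R)_{θ,∞}` with norm `≤ ϱ`, if `f_t ∈ D_F` is the K-functional
approximation for `t = c α^{1/D} ϱ^{(u−2)/D}` (`D := (1−θ)u+2θ`) and `f_α`
minimizes the Tikhonov functional with exact data `F(f)`, then
`‖f − f_α‖_{X₋} ≤ C ϱ^{u/D} α^{θ/D}` and `‖f_α‖_{X_R} ≤ C ϱ^{2/D} α^{(θ−1)/D}`,
with `C` depending only on `M₁, M₂, u, θ, c` (and the quasi-norm constant). -/
theorem oversmoothing_bias_bounds {E Y : Type*} [AddCommGroup E] [NormedAddCommGroup Y]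
    (Nm NR : E → ℝ) (XR DF : Set E) (F : E → Y)
    (M₁ M₂ u θ c : ℝ) (hM₁ : 0 < M₁) (hM₂ : 0 < M₂) (hu : 0 < u)
    (hθ0 : 0 < θ) (hθ1 : θ ≤ 1) (hc : 0 < c)
    (hNm : ∀ g, 0 ≤ Nm g) (hNR : ∀ g, 0 ≤ NR g) :
    ∃ C > 0, ∀ (f : E) (ϱ α : ℝ) (fα ft : E), 0 < ϱ → 0 < α →
      -- two-sided Lipschitz condition on `D_F ∪ {f}`
      (∀ f₁ ∈ insert f DF, ∀ f₂ ∈ insert f DF,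
        M₁⁻¹ * Nm (f₁ - f₂) ≤ ‖F f₁ - F f₂‖ ∧ ‖F f₁ - F f₂‖ ≤ M₂ * Nm (f₁ - f₂)) →
      -- `f ∈ (X₋,X_R)_{θ,∞}` with norm at most `ϱ`
      (∀ t > 0, Kfun Nm XR NR t f ≤ ϱ * t ^ θ) →
      -- the K-functional approximation `f_t` for the specific parameter `t₀`
      (ft ∈ DF ∧
        Nm (f - ft) ≤ 2 * ϱ * (c * α ^ ((1 : ℝ) / ((1 - θ) * u + 2 * θ)) *
          ϱ ^ ((u - 2) / ((1 - θ) * u + 2 * θ))) ^ θ ∧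
        NR ft ≤ 2 * ϱ * (c * α ^ ((1 : ℝ) / ((1 - θ) * u + 2 * θ)) *
          ϱ ^ ((u - 2) / ((1 - θ) * u + 2 * θ))) ^ (θ - 1)) →
      -- `f_α` minimizes the Tikhonov functional with exact data `F(f)` over `D_F`
      (fα ∈ DF ∧ ∀ h ∈ DF,
        1 / (2 * α) * ‖F f - F fα‖ ^ 2 + 1 / u * NR fα ^ u ≤
          1 / (2 * α) * ‖F f - F h‖ ^ 2 + 1 / u * NR h ^ u) →
      Nm (f - fα) ≤ C * ϱ ^ (u / ((1 - θ) * u + 2 * θ)) * α ^ (θ / ((1 - θ) * u + 2 * θ)) ∧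
      NR fα ≤ C * ϱ ^ ((2 : ℝ) / ((1 - θ) * u + 2 * θ)) *
        α ^ ((θ - 1) / ((1 - θ) * u + 2 * θ)) :=
  oversmoothing_bias_bounds_general Nm NR XR DF F M₁ M₂ u θ c hM₁ hM₂ hu hθ0 hθ1 hc hNR
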